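/- arXiv:2010.00297 — 5 statements merged into one kernel-verified Lean document; each statement's English description precedes it below -/
import Mathlib

section
/- For every probability measure ρ on the space of infinite sequences over a finite alphabet X, there exists a deterministic sequence (Dirac measure μ) such that the cumulative KL loss satisfies L_n(μ,ρ) ≥ n·log|X| for all n, where L_n(μ,ρ) = Σ_{x_{1..n}} μ(x_{1..n}) log(μ(x_{1..n})/ρ(x_{1..n})). -/
open Real Filter

noncomputable section

/-- A (discrete-time) stochastic process over a finite alphabet `X`, represented by the
probabilities it assigns to finite words: nonnegative, summing to one at each length,
and consistent under extension. -/
def IsProcess {X : Type} [Fintype X] (μ : (n : ℕ) → (Fin n → X) → ℝ) : Prop :=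
  (∀ n w, 0 ≤ μ n w) ∧ (∀ n, ∑ w : Fin n → X, μ n w = 1) ∧
  (∀ n (w : Fin n → X), μ n w = ∑ a : X, μ (n + 1) (Fin.snoc w a))

/-- One summand of the cumulative KL loss, valued in the extended reals so that the
convention `0 · log(0/b) = 0` and `a · log(a/0) = ∞` (for `a > 0`) holds. -/
def klTerm (a b : ℝ) : EReal :=
  if a = 0 then 0 else if b = 0 then (⊤ : EReal) else ((a * Real.log (a / b) : ℝ) : EReal)

/-- Cumulative (time `n`) KL loss `L_n(μ,ρ) = Σ_{x_{1..n}} μ(x_{1..n}) log(μ(x_{1..n})/ρ(x_{1..n}))`. -/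
def KLE {X : Type} [Fintype X] (μ ρ : (n : ℕ) → (Fin n → X) → ℝ) (n : ℕ) : EReal :=
  ∑ w : Fin n → X, klTerm (μ n w) (ρ n w)

/-- The Dirac process concentrated on the single infinite sequence `x`. -/
def diracP {X : Type} [DecidableEq X] (x : ℕ → X) : (n : ℕ) → (Fin n → X) → ℝ :=
  fun n w => if (∀ i : Fin n, w i = x i) then 1 else 0

/-- It is impossible to predict every process: for every predictor `ρ` there is a
deterministic sequence (Dirac measure `μ`) with `L_n(μ,ρ) ≥ n log|X|` for all `n`. -/
theorem impossible_to_predict_every_process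
    {X : Type} [Fintype X] [DecidableEq X] (hX : 2 ≤ Fintype.card X)
    (ρ : (n : ℕ) → (Fin n → X) → ℝ) (hρ : IsProcess ρ) :
    ∃ x : ℕ → X, ∀ n : ℕ,
      (((n : ℝ) * Real.log (Fintype.card X) : ℝ) : EReal) ≤ KLE (diracP x) ρ n := by
  classical
  obtain ⟨h0, h1, h2⟩ := hρ
  set c := Fintype.card X with hc
  have hcpos : 0 < c := by omega
  have : Nonempty X := Fintype.card_pos_iff.mp hcpos
  have hchoice : ∀ n (v : Fin n → X), ∃ a : X, ∀ b : X,
      ρ (n+1) (Fin.snoc v a) ≤ ρ (n+1) (Fin.snoc v b) := by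
    intro n v
    obtain ⟨a, -, ha⟩ := Finset.exists_min_image Finset.univ
      (fun a => ρ (n+1) (Fin.snoc v a)) ⟨Classical.arbitrary X, Finset.mem_univ _⟩
    exact ⟨a, fun b => ha b (Finset.mem_univ b)⟩
  choose f hf using hchoice
  let w : (n : ℕ) → Fin n → X :=
    fun n => Nat.rec (motive := fun n => Fin n → X) (fun i => i.elim0)
      (fun n wn => Fin.snoc wn (f n wn)) n
  have hwsucc : ∀ n, w (n+1) = Fin.snoc (w n) (f n (w n)) := fun n => rfl
  refine ⟨fun n => f n (w n), ?_⟩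
  have hw : ∀ n, (fun i : Fin n => f i.val (w i.val)) = w n := by
    intro n
    induction n with
    | zero => funext i; exact i.elim0
    | succ n ih =>
      funext i
      rw [hwsucc]
      induction i using Fin.lastCases with
      | last => simp
      | cast j =>
        rw [Fin.snoc_castSucc, ← ih]
        rfl
  have hbound : ∀ n, (c : ℝ)^n * ρ n (w n) ≤ 1 := by
    intro n
    induction n with
    | zero =>
      have : ρ 0 (w 0) = 1 := by
        have := h1 0
        rwa [Fintype.sum_unique (fun v : Fin 0 → X => ρ 0 v)] at this
      simp [this]
    | succ n ih =>
      have hmin : (c : ℝ) * ρ (n+1) (w (n+1)) ≤ ρ n (w n) := by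
        have := Finset.card_nsmul_le_sum Finset.univ
          (fun b => ρ (n+1) (Fin.snoc (w n) b)) (ρ (n+1) (Fin.snoc (w n) (f n (w n))))
          (fun b _ => hf n (w n) b)
        rw [Finset.card_univ, ← h2 n (w n)] at this
        rw [hwsucc]
        simpa [nsmul_eq_mul] using this
      calc (c : ℝ)^(n+1) * ρ (n+1) (w (n+1))
          = (c : ℝ)^n * ((c : ℝ) * ρ (n+1) (w (n+1))) := by ring
        _ ≤ (c : ℝ)^n * ρ n (w n) := by
            apply mul_le_mul_of_nonneg_left hmin (by positivity)
        _ ≤ 1 := ih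
  intro n
  have hsum : KLE (diracP (fun n => f n (w n))) ρ n = klTerm 1 (ρ n (w n)) := by
    unfold KLE diracP
    rw [Finset.sum_eq_single (w n)]
    · rw [if_pos]
      intro i; exact congrFun (hw n) i ▸ rfl
    · intro v _ hv
      rw [if_neg, klTerm, if_pos rfl]
      intro h
      apply hv
      funext i
      rw [h i]
      exact congrFun (hw n) i
    · intro h; exact absurd (Finset.mem_univ _) h
  rw [hsum]
  unfold klTerm
  rw [if_neg one_ne_zero]
  by_cases hb : ρ n (w n) = 0
  · rw [if_pos hb]; exact le_top
  · rw [if_neg hb]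
    have hbpos : 0 < ρ n (w n) := lt_of_le_of_ne (h0 n (w n)) (Ne.symm hb)
    rw [EReal.coe_le_coe_iff]
    have hle : ρ n (w n) ≤ ((c : ℝ)^n)⁻¹ := by
      have hp : (0:ℝ) < (c:ℝ)^n := by positivity
      have := mul_le_mul_of_nonneg_left (hbound n) (inv_nonneg.mpr hp.le)
      rwa [← mul_assoc, inv_mul_cancel₀ hp.ne', one_mul, mul_one] at this
    have := Real.log_le_log hbpos hle
    rw [Real.log_inv, Real.log_pow] at this
    rw [one_mul, one_div, Real.log_inv]
    linarith
end
end

section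
/- Let μ = α·μ_a + (1−α)·μ_s be the Lebesgue decomposition of μ with respect to ρ, where μ_a ≪ ρ and μ_s ⊥ ρ, with α ∈ [0,1]. If μ_s ⊥ ρ is witnessed by a set W with μ_a(W)=ρ(W)=1 and μ_s(W)=0, then the conditional total variation distance v(μ_s, ρ, x_{1..n}) = sup_A |μ_s(A|x_{1..n}) − ρ(A|x_{1..n})| converges to 1 μ_s-almost surely. -/
open MeasureTheory Filter
open scoped ENNReal NNReal Topology

noncomputable section

/-- The cylinder set of all sequences agreeing with `x` on the first `n` coordinates. -/
def cylinder {X : Type} (x : ℕ → X) (n : ℕ) : Set (ℕ → X) :=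
  {y | ∀ i : Fin n, y i = x i}

/-- Conditional total variation distance `v(μ, ρ, x_{1..n})`: the supremum over measurable
sets `A` of the difference of the conditional probabilities given the cylinder
`x_{1..n}`, defined to be `1` if one of the cylinder probabilities vanishes. -/
def condTV {X : Type} [MeasurableSpace X] (μ ρ : Measure (ℕ → X)) (x : ℕ → X) (n : ℕ) : ℝ :=
  if 0 < μ (cylinder x n) ∧ 0 < ρ (cylinder x n) then
    ⨆ A : {A : Set (ℕ → X) // MeasurableSet A},
      |(μ (A.1 ∩ cylinder x n)).toReal / (μ (cylinder x n)).toReal -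
        (ρ (A.1 ∩ cylinder x n)).toReal / (ρ (cylinder x n)).toReal|
  else 1

/-- Let `μ = α μ_a + (1−α) μ_s` be the Lebesgue decomposition of `μ` w.r.t. `ρ`, where
`μ_a ≪ ρ` and `μ_s ⊥ ρ` is witnessed by a measurable set `W` with
`μ_a(W) = ρ(W) = 1` and `μ_s(W) = 0`. Then the conditional total variation
`v(μ_s, ρ, x_{1..n})` converges to `1` for `μ_s`-almost every sequence `x`. -/
theorem condTV_tendsto_one_of_singular_part
    {X : Type} [Fintype X] [MeasurableSpace X]
    (μ μa μs ρ : Measure (ℕ → X))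
    [IsProbabilityMeasure μ] [IsProbabilityMeasure μa]
    [IsProbabilityMeasure μs] [IsProbabilityMeasure ρ]
    (α : ℝ≥0) (hα : α ≤ 1)
    (hdecomp : μ = α • μa + (1 - α) • μs)
    (hac : μa ≪ ρ)
    (W : Set (ℕ → X)) (hW : MeasurableSet W)
    (hμaW : μa W = 1) (hρW : ρ W = 1) (hμsW : μs W = 0) :
    ∀ᵐ x ∂μs, Tendsto (fun n => condTV μs ρ x n) atTop (𝓝 1) := by
  -- ρ gives no mass to Wᶜ
  have hρWc : ρ Wᶜ = 0 := by
    have h := measure_compl hW (measure_ne_top ρ W)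
    rw [hρW, measure_univ] at h
    simpa using h
  -- μs-a.e., all cylinders have positive μs-measure
  have hpos : ∀ᵐ x ∂μs, ∀ n, 0 < μs (_root_.cylinder x n) := by
    rw [ae_all_iff]
    intro n
    rw [ae_iff]
    refine measure_mono_null (fun x hx => ?_)
      (measure_iUnion_null (s := fun v : {v : Fin n → X // μs {y : ℕ → X | ∀ i : Fin n, y i = v i} = 0} =>
        {y : ℕ → X | ∀ i : Fin n, y i = v.1 i}) (fun v => v.2))
    simp only [Set.mem_setOf_eq, not_lt, le_zero_iff] at hx
    exact Set.mem_iUnion.mpr ⟨⟨fun i => x i, hx⟩, fun i => rfl⟩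
  filter_upwards [hpos] with x hx
  have key : ∀ n, condTV μs ρ x n = 1 := by
    intro n
    by_cases hρc : 0 < ρ (_root_.cylinder x n)
    · rw [condTV, if_pos ⟨hx n, hρc⟩]
      set c := _root_.cylinder x n with hc
      have hμsc : (μs c).toReal ≠ 0 := by
        refine (ENNReal.toReal_pos (hx n).ne' (measure_ne_top _ _)).ne'
      -- μs (Wᶜ ∩ c) = μs c
      have hWc : μs (Wᶜ ∩ c) = μs c := by
        refine le_antisymm (measure_mono Set.inter_subset_right) ?_
        have h1 : μs (W ∩ c) = 0 :=
          measure_mono_null Set.inter_subset_left hμsW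
        calc μs c ≤ μs (Wᶜ ∩ c) + μs (W ∩ c) := by
              refine le_trans (measure_mono ?_) (measure_union_le _ _)
              intro y hy
              by_cases hyW : y ∈ W
              · exact Or.inr ⟨hyW, hy⟩
              · exact Or.inl ⟨hyW, hy⟩
          _ = μs (Wᶜ ∩ c) := by rw [h1, add_zero]
      have hρWcc : ρ (Wᶜ ∩ c) = 0 :=
        measure_mono_null Set.inter_subset_left hρWc
      -- every term is ≤ 1
      have hbound : ∀ A : {A : Set (ℕ → X) // MeasurableSet A},
          |(μs (A.1 ∩ c)).toReal / (μs c).toReal -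
            (ρ (A.1 ∩ c)).toReal / (ρ c).toReal| ≤ 1 := by
        intro A
        have h1 : (μs (A.1 ∩ c)).toReal / (μs c).toReal ≤ 1 := by
          apply div_le_one_of_le₀
          · exact ENNReal.toReal_mono (measure_ne_top _ _)
              (measure_mono Set.inter_subset_right)
          · exact ENNReal.toReal_nonneg
        have h2 : (ρ (A.1 ∩ c)).toReal / (ρ c).toReal ≤ 1 := by
          apply div_le_one_of_le₀
          · exact ENNReal.toReal_mono (measure_ne_top _ _)
              (measure_mono Set.inter_subset_right)
          · exact ENNReal.toReal_nonneg
        have h3 : 0 ≤ (μs (A.1 ∩ c)).toReal / (μs c).toReal :=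
          div_nonneg ENNReal.toReal_nonneg ENNReal.toReal_nonneg
        have h4 : 0 ≤ (ρ (A.1 ∩ c)).toReal / (ρ c).toReal :=
          div_nonneg ENNReal.toReal_nonneg ENNReal.toReal_nonneg
        rw [abs_sub_le_iff]
        constructor <;> linarith
      refine le_antisymm (ciSup_le hbound) ?_
      have hval : |(μs ((⟨Wᶜ, hW.compl⟩ : {A : Set (ℕ → X) // MeasurableSet A}).1 ∩ c)).toReal
            / (μs c).toReal -
          (ρ ((⟨Wᶜ, hW.compl⟩ : {A : Set (ℕ → X) // MeasurableSet A}).1 ∩ c)).toReal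
            / (ρ c).toReal| = 1 := by
        simp [hWc, hρWcc, div_self hμsc]
      have hb : BddAbove (Set.range fun A : {A : Set (ℕ → X) // MeasurableSet A} =>
          |(μs (A.1 ∩ c)).toReal / (μs c).toReal - (ρ (A.1 ∩ c)).toReal / (ρ c).toReal|) :=
        ⟨1, by rintro _ ⟨A, rfl⟩; exact hbound A⟩
      have hle := le_ciSup hb (⟨Wᶜ, hW.compl⟩ : {A : Set (ℕ → X) // MeasurableSet A})
      rw [hval] at hle
      exact hle
    · rw [condTV, if_neg (fun h => hρc h.2)]
  simp only [key]
  exact tendsto_const_nhds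
end
end

section
/- There exist probability measures μ, ρ, χ on {0,1}^∞ such that the conditional total variation at time n, a_n(μ,ρ) = Σ_a |μ(x_n=a|x_{<n}) − ρ(x_n=a|x_{<n})|, converges to 0 μ-a.s. (ρ predicts μ in absolute distance), but for ρ' = (1/2)(ρ+χ), a_n(μ,ρ') does not converge to 0 μ-a.s. -/
open Real Filter
open scoped Topology

noncomputable section

/-- Conditional probability of the next symbol `a` given the word `w`. -/
def condP {X : Type} [Fintype X] (ν : (n : ℕ) → (Fin n → X) → ℝ) (n : ℕ)
    (w : Fin n → X) (a : X) : ℝ :=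
  ν (n + 1) (Fin.snoc w a) / ν n w

/-- One-step absolute (ℓ1) distance between the conditional next-symbol distributions. -/
def aStep {X : Type} [Fintype X] (μ ρ : (n : ℕ) → (Fin n → X) → ℝ) (n : ℕ)
    (w : Fin n → X) : ℝ :=
  ∑ a : X, |condP μ n w a - condP ρ n w a|

/-!
Take `μ` the point mass on `111…` and `ρ` the independent process with
`ρ(1ⁿ) = 1/(n+1)`, so that `a_n(μ,ρ) = 2/(n+2) → 0`. The contaminant `χ` is independent with
`χ(1ⁿ) = 4^(-⌊log₄ n⌋)`. Along `1^∞` the mixture predicts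
`ρ'(1 | 1ⁿ) = (ρ(1ⁿ⁺¹) + χ(1ⁿ⁺¹)) / (ρ(1ⁿ) + χ(1ⁿ))`, and at `n + 1 = 4^(k+1)` the numerator is at
most `2·4^(-(k+1))` while the denominator is at least `χ(1ⁿ) = 4^(-k)`; hence this prediction is at
most `1/2` and `a_n(μ,ρ') ≥ 1` infinitely often.
-/

theorem snoc_const_self {X : Type} (n : ℕ) (a : X) :
    (Fin.snoc (fun _ : Fin n => a) a : Fin (n + 1) → X) = fun _ => a := by
  funext i
  refine Fin.lastCases ?_ (fun j => ?_) i <;> simp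

section Prediction

variable {X : Type} [Fintype X]

theorem IsProcess.condP_nonneg {ν : (n : ℕ) → (Fin n → X) → ℝ} (hν : IsProcess ν) (n : ℕ)
    (w : Fin n → X) (a : X) : 0 ≤ condP ν n w a :=
  div_nonneg (hν.1 _ _) (hν.1 _ _)

theorem IsProcess.sum_condP {ν : (n : ℕ) → (Fin n → X) → ℝ} (hν : IsProcess ν) {n : ℕ}
    {w : Fin n → X} (hw : ν n w ≠ 0) : ∑ a, condP ν n w a = 1 := by
  unfold condP
  rw [← Finset.sum_div, ← hν.2.2, div_self hw]

theorem IsProcess.average {ρ χ : (n : ℕ) → (Fin n → X) → ℝ} (hρ : IsProcess ρ)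
    (hχ : IsProcess χ) : IsProcess fun n w => (ρ n w + χ n w) / 2 := by
  refine ⟨fun n w => by linarith [hρ.1 n w, hχ.1 n w], fun n => ?_, fun n w => ?_⟩
  · rw [← Finset.sum_div, Finset.sum_add_distrib, hρ.2.1, hχ.2.1]
    norm_num
  · rw [← Finset.sum_div, Finset.sum_add_distrib, ← hρ.2.2, ← hχ.2.2]

theorem sum_abs_ite_sub [DecidableEq X] {d : X → ℝ} (hd : ∀ a, 0 ≤ d a)
    (hsum : ∑ a, d a = 1) (b : X) :
    ∑ a, |(if a = b then 1 else 0) - d a| = 2 * (1 - d b) := by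
  have hrest : ∑ a ∈ {b}ᶜ, d a = 1 - d b := by
    rw [← hsum, Fintype.sum_eq_add_sum_compl b]; ring
  have hb : d b ≤ 1 := hsum ▸ Finset.single_le_sum (fun a _ => hd a) (Finset.mem_univ b)
  rw [Fintype.sum_eq_add_sum_compl b, if_pos rfl, abs_of_nonneg (sub_nonneg.2 hb)]
  rw [Finset.sum_congr rfl fun a ha => by
    rw [if_neg (Finset.mem_compl.1 ha ∘ Finset.mem_singleton.2), zero_sub, abs_neg,
      abs_of_nonneg (hd a)], hrest]
  ring

theorem aStep_eq_of_condP_eq_ite [DecidableEq X] {μ ν : (n : ℕ) → (Fin n → X) → ℝ} {n : ℕ}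
    {w : Fin n → X} {b : X} (hμ : ∀ a, condP μ n w a = if a = b then 1 else 0)
    (hν : IsProcess ν) (hw : ν n w ≠ 0) : aStep μ ν n w = 2 * (1 - condP ν n w b) := by
  simp only [aStep, hμ]
  exact sum_abs_ite_sub (hν.condP_nonneg n w) (hν.sum_condP hw) b

end Prediction

section ProductProcess

variable {X : Type}

def productProcess (q : ℕ → X → ℝ) (n : ℕ) (w : Fin n → X) : ℝ := ∏ i : Fin n, q i (w i)

theorem productProcess_snoc (q : ℕ → X → ℝ) (n : ℕ) (w : Fin n → X) (a : X) :
    productProcess q (n + 1) (Fin.snoc w a) = productProcess q n w * q n a := by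
  simp [productProcess, Fin.prod_univ_castSucc]

theorem isProcess_productProcess [Fintype X] {q : ℕ → X → ℝ} (hq : ∀ n a, 0 ≤ q n a)
    (hq1 : ∀ n, ∑ a, q n a = 1) : IsProcess (productProcess q) := by
  classical
  refine ⟨fun n w => Finset.prod_nonneg fun i _ => hq _ _, fun n => ?_, fun n w => ?_⟩
  · simp only [productProcess, ← Fintype.prod_sum, hq1, Finset.prod_const_one]
  · simp only [productProcess_snoc, ← Finset.mul_sum, hq1, mul_one]

theorem condP_productProcess [Fintype X] {q : ℕ → X → ℝ} {n : ℕ} {w : Fin n → X}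
    (hw : productProcess q n w ≠ 0) (a : X) : condP (productProcess q) n w a = q n a := by
  unfold condP
  rw [productProcess_snoc, mul_div_cancel_left₀ _ hw]

end ProductProcess

-- The Bernoulli process giving the word `1ⁿ` the mass `f n / f 0`.
def onesProcess (f : ℕ → ℝ) : (n : ℕ) → (Fin n → Bool) → ℝ :=
  productProcess fun n b => if b then f (n + 1) / f n else 1 - f (n + 1) / f n

section OnesProcess

variable {f : ℕ → ℝ}

theorem isProcess_onesProcess (hpos : ∀ n, 0 < f n) (hf : Antitone f) :
    IsProcess (onesProcess f) := by
  refine isProcess_productProcess (fun n b => ?_) (fun n => by simp)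
  have hle : f (n + 1) / f n ≤ 1 := (div_le_one (hpos n)).2 (hf n.le_succ)
  have hnn : 0 ≤ f (n + 1) / f n := (div_pos (hpos _) (hpos n)).le
  cases b
  · simpa using hle
  · simpa using hnn

theorem onesProcess_ones (hf : ∀ n, f n ≠ 0) (n : ℕ) :
    onesProcess f n (fun _ => true) = f n / f 0 := by
  refine (Fin.prod_univ_eq_prod_range (fun i => f (i + 1) / f i) n).trans <|
    Finset.prod_range_induction _ (fun n => f n / f 0) (div_self (hf 0)) n fun k _ => ?_
  field_simp [hf k]

theorem condP_onesProcess_ones (hf : ∀ n, f n ≠ 0) (n : ℕ) (a : Bool) :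
    condP (onesProcess f) n (fun _ => true) a
      = if a then f (n + 1) / f n else 1 - f (n + 1) / f n := by
  refine condP_productProcess ?_ a
  rw [← onesProcess, onesProcess_ones hf]
  exact div_ne_zero (hf n) (hf 0)

end OnesProcess

theorem aStep_onesProcess_one {ν : (n : ℕ) → (Fin n → Bool) → ℝ} (hν : IsProcess ν) {n : ℕ}
    (hn : ν n (fun _ => true) ≠ 0) :
    aStep (onesProcess 1) ν n (fun _ => true)
      = 2 * (1 - ν (n + 1) (fun _ => true) / ν n (fun _ => true)) := by
  rw [aStep_eq_of_condP_eq_ite (fun a => ?_) hν hn, condP, snoc_const_self]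
  rw [condP_onesProcess_ones (f := 1) fun _ => one_ne_zero]
  cases a <;> simp

def chiOnes (n : ℕ) : ℝ := 4⁻¹ ^ Nat.log 4 n

theorem chiOnes_pos (n : ℕ) : 0 < chiOnes n := by
  unfold chiOnes; positivity

theorem chiOnes_antitone : Antitone chiOnes := fun _ _ h =>
  pow_le_pow_of_le_one (by norm_num) (by norm_num) (Nat.log_mono_right h)

theorem onesProcess_chiOnes_ones (n : ℕ) : onesProcess chiOnes n (fun _ => true) = chiOnes n := by
  rw [onesProcess_ones fun n => (chiOnes_pos n).ne']
  simp [chiOnes]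

theorem isProcess_onesProcess_inv_succ :
    IsProcess (onesProcess fun n : ℕ => ((n : ℝ) + 1)⁻¹) :=
  isProcess_onesProcess (fun n => by positivity) fun _ _ h => by gcongr

theorem onesProcess_inv_succ_ones (n : ℕ) :
    onesProcess (fun n : ℕ => ((n : ℝ) + 1)⁻¹) n (fun _ => true) = ((n : ℝ) + 1)⁻¹ := by
  rw [onesProcess_ones fun n => by positivity]
  simp

theorem tendsto_aStep_onesProcess_inv_succ :
    Tendsto (fun n => aStep (onesProcess 1) (onesProcess fun n : ℕ => ((n : ℝ) + 1)⁻¹) n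
      fun _ => true) atTop (𝓝 0) := by
  have hratio : Tendsto (fun n : ℕ => ((n : ℝ) + 1 + 1)⁻¹ / ((n : ℝ) + 1)⁻¹) atTop (𝓝 1) :=
    ((tendsto_natCast_div_add_atTop (1 : ℝ)).comp (tendsto_add_atTop_nat 1)).congr fun n => by
      simp only [Function.comp_apply, inv_div_inv]; push_cast; rfl
  rw [show (0 : ℝ) = 2 * (1 - 1) by norm_num]
  refine ((tendsto_const_nhds.sub hratio).const_mul 2).congr fun n => ?_
  rw [aStep_onesProcess_one isProcess_onesProcess_inv_succ
    (by rw [onesProcess_inv_succ_ones]; positivity), onesProcess_inv_succ_ones,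
    onesProcess_inv_succ_ones]
  push_cast
  rfl

theorem frequently_inv_succ_add_chiOnes_div_le_half :
    ∃ᶠ n : ℕ in atTop,
      (((n : ℝ) + 1 + 1)⁻¹ + chiOnes (n + 1)) / (((n : ℝ) + 1)⁻¹ + chiOnes n) ≤ 1 / 2 := by
  refine frequently_atTop.2 fun N => ?_
  obtain ⟨n, hn⟩ : ∃ n, n + 1 = 4 ^ (N + 1) := ⟨_, Nat.succ_pred_eq_of_pos (by positivity)⟩
  have hpow : 4 ^ (N + 1) = 4 * 4 ^ N := pow_succ' 4 N
  have hN : N < 4 ^ N := Nat.lt_pow_self (by norm_num)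
  have hlog : Nat.log 4 n = N := Nat.log_eq_of_pow_le_of_lt_pow (by omega) (by omega)
  have hlog' : Nat.log 4 (n + 1) = N + 1 := by rw [hn, Nat.log_pow (by norm_num)]
  have hcast : ((n : ℝ) + 1) = 4 ^ (N + 1) := by exact_mod_cast hn
  refine ⟨n, by omega, ?_⟩
  have hρn : ((n : ℝ) + 1)⁻¹ = 4⁻¹ * (4 ^ N)⁻¹ := by rw [hcast, pow_succ', mul_inv]
  have hρn1 : ((n : ℝ) + 1 + 1)⁻¹ ≤ ((n : ℝ) + 1)⁻¹ := by gcongr; linarith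
  have hχn : chiOnes n = (4 ^ N)⁻¹ := by rw [chiOnes, hlog, inv_pow]
  have hχn1 : chiOnes (n + 1) = 4⁻¹ * (4 ^ N)⁻¹ := by
    rw [chiOnes, hlog', inv_pow, pow_succ', mul_inv]
  have hz : (0 : ℝ) < (4 ^ N)⁻¹ := by positivity
  rw [div_le_iff₀ (add_pos (by positivity) (chiOnes_pos n))]
  linarith

theorem frequently_one_le_aStep_average :
    ∃ᶠ n : ℕ in atTop, 1 ≤ aStep (onesProcess 1)
      (fun n w => (onesProcess (fun n : ℕ => ((n : ℝ) + 1)⁻¹) n w + onesProcess chiOnes n w) / 2)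
      n fun _ => true := by
  refine frequently_inv_succ_add_chiOnes_div_le_half.mono fun n hn => ?_
  have hpos : 0 < ((n : ℝ) + 1)⁻¹ + chiOnes n := add_pos (by positivity) (chiOnes_pos n)
  rw [aStep_onesProcess_one (isProcess_onesProcess_inv_succ.average
    (isProcess_onesProcess chiOnes_pos chiOnes_antitone)) ?_]
  · rw [onesProcess_inv_succ_ones, onesProcess_inv_succ_ones, onesProcess_chiOnes_ones,
      onesProcess_chiOnes_ones, div_div_div_cancel_right₀ two_ne_zero]
    push_cast
    linarith
  · rw [onesProcess_inv_succ_ones, onesProcess_chiOnes_ones]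
    exact (half_pos hpos).ne'

/-- Contamination can destroy prediction in absolute distance: there are measures
`μ, ρ, χ` on `{0,1}^∞` such that `ρ` predicts `μ` in absolute distance, i.e.
`a_n(μ,ρ|x_{<n}) → 0` `μ`-a.s. (here `μ` is concentrated on a single sequence `x`, so
a.s. means along `x`), but for `ρ' = (ρ + χ)/2`, `a_n(μ,ρ'|x_{<n})` does not converge
to `0` `μ`-a.s. -/
theorem contamination_can_destroy_absolute_distance_prediction :
    ∃ μ ρ χ : (n : ℕ) → (Fin n → Bool) → ℝ,
      IsProcess μ ∧ IsProcess ρ ∧ IsProcess χ ∧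
      ∃ x : ℕ → Bool,
        (∀ n : ℕ, μ n (fun i : Fin n => x i) = 1) ∧
        Tendsto (fun n : ℕ => aStep μ ρ n (fun i : Fin n => x i)) atTop (𝓝 0) ∧
        ¬ Tendsto
            (fun n : ℕ =>
              aStep μ (fun n w => (ρ n w + χ n w) / 2) n (fun i : Fin n => x i))
            atTop (𝓝 0) := by
  refine ⟨onesProcess 1, onesProcess fun n : ℕ => ((n : ℝ) + 1)⁻¹, onesProcess chiOnes,
    isProcess_onesProcess (fun _ => one_pos) antitone_const, isProcess_onesProcess_inv_succ,
    isProcess_onesProcess chiOnes_pos chiOnes_antitone, fun _ => true,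
    fun n => by simp [onesProcess_ones], tendsto_aStep_onesProcess_inv_succ, fun h => ?_⟩
  obtain ⟨n, hlt, hge⟩ :=
    ((h.eventually (gt_mem_nhds one_pos)).and_frequently frequently_one_le_aStep_average).exists
  linarith
end
end

section
/- Let X={0,1,2} and for a sequence x ∈ X^∞ define the hidden-Markov measure μ_x as the image of the stationary positive-recurrent Markov chain M on ℕ (transition from j to j+1 with probability j²/(j+1)², else back to 1) under the map g_x(j)=x_j. Then the cumulative KL loss of μ_x on the Dirac measure δ_x satisfies L_n(δ_x, μ_x) ≤ −log π_1 + 2 log(n+1) = o(n), where π_1 > 0 is the stationary probability of state 1. -/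
open Real

noncomputable section

def chainT (j j' : ℕ) : ℝ :=
  if j' = j + 1 then (j : ℝ) ^ 2 / ((j : ℝ) + 1) ^ 2
  else if j' = 1 then 1 - (j : ℝ) ^ 2 / ((j : ℝ) + 1) ^ 2
  else 0

def trajWeight (sd : ℕ → ℝ) (n : ℕ) (s : Fin (n + 1) → ℕ) : ℝ :=
  sd (s 0) * ∏ i : Fin n, chainT (s i.castSucc) (s i.succ)

open scoped Classical in
def hmmWord (sd : ℕ → ℝ) (x : ℕ → Fin 3) (n : ℕ) (w : Fin (n + 1) → Fin 3) : ℝ :=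
  ∑' s : Fin (n + 1) → ℕ, if (∀ i, x (s i) = w i) then trajWeight sd n s else 0

lemma chainT_p_le_one (j : ℕ) : (j : ℝ) ^ 2 / ((j : ℝ) + 1) ^ 2 ≤ 1 := by
  rw [div_le_one (by positivity)]
  nlinarith [(Nat.cast_nonneg j : (0:ℝ) ≤ (j:ℝ))]

lemma chainT_nonneg (j j' : ℕ) : 0 ≤ chainT j j' := by
  unfold chainT
  have := chainT_p_le_one j
  split_ifs
  · positivity
  · linarith
  · exact le_rfl

lemma chainT_summable (j : ℕ) : Summable (fun j' => chainT j j') := by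
  apply summable_of_ne_finset_zero (s := ({1, j + 1} : Finset ℕ))
  intro b hb
  simp only [Finset.mem_insert, Finset.mem_singleton, not_or] at hb
  unfold chainT
  rw [if_neg hb.2, if_neg hb.1]

lemma chainT_tsum_le (j : ℕ) : ∑' j', chainT j j' ≤ 1 := by
  rw [tsum_eq_sum (s := ({1, j + 1} : Finset ℕ))
    (by intro b hb
        simp only [Finset.mem_insert, Finset.mem_singleton, not_or] at hb
        unfold chainT; rw [if_neg hb.2, if_neg hb.1])]
  rcases Nat.eq_zero_or_pos j with h | h
  · subst h
    norm_num [chainT]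
  · rw [Finset.sum_pair (by omega)]
    have h1 : chainT j 1 = 1 - (j : ℝ) ^ 2 / ((j : ℝ) + 1) ^ 2 := by
      unfold chainT; rw [if_neg (by omega), if_pos rfl]
    have h2 : chainT j (j + 1) = (j : ℝ) ^ 2 / ((j : ℝ) + 1) ^ 2 := by
      unfold chainT; rw [if_pos rfl]
    rw [h1, h2]; linarith

lemma trajWeight_nonneg (sd : ℕ → ℝ) (hsd0 : ∀ j, 0 ≤ sd j) (n : ℕ)
    (s : Fin (n + 1) → ℕ) : 0 ≤ trajWeight sd n s :=
  mul_nonneg (hsd0 _) (Finset.prod_nonneg fun i _ => chainT_nonneg _ _)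

lemma trajWeight_snoc (sd : ℕ → ℝ) (n : ℕ) (s : Fin (n + 1) → ℕ) (j : ℕ) :
    trajWeight sd (n + 1) (Fin.snoc s j) =
      trajWeight sd n s * chainT (s (Fin.last n)) j := by
  unfold trajWeight
  rw [Fin.prod_univ_castSucc]
  have h0 : (Fin.snoc s j : Fin (n + 2) → ℕ) 0 = s 0 := by
    show (Fin.snoc s j : Fin (n + 2) → ℕ) (Fin.castSucc 0) = s 0
    rw [Fin.snoc_castSucc]
  have hlast : (Fin.snoc s j : Fin (n + 2) → ℕ) (Fin.last n).succ = j := by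
    rw [Fin.succ_last, Fin.snoc_last]
  have hprod : ∀ i : Fin n,
      chainT ((Fin.snoc s j : Fin (n + 2) → ℕ) i.castSucc.castSucc)
        ((Fin.snoc s j : Fin (n + 2) → ℕ) i.castSucc.succ)
      = chainT (s i.castSucc) (s i.succ) := by
    intro i
    rw [Fin.succ_castSucc, Fin.snoc_castSucc, Fin.snoc_castSucc]
  simp only [Fin.succ_castSucc, Fin.snoc_castSucc, h0, hlast]
  ring

def finSnocEquiv (n : ℕ) : ((Fin (n + 1) → ℕ) × ℕ) ≃ (Fin (n + 2) → ℕ) where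
  toFun p := Fin.snoc p.1 p.2
  invFun s := (Fin.init s, s (Fin.last (n + 1)))
  left_inv p := by simp [Fin.init_snoc, Fin.snoc_last]
  right_inv s := Fin.snoc_init_self s

set_option maxHeartbeats 1000000 in
lemma trajWeight_summable (sd : ℕ → ℝ) (hsd0 : ∀ j, 0 ≤ sd j) (hsd : Summable sd) :
    ∀ n, Summable (trajWeight sd n) := by
  intro n
  induction n with
  | zero =>
    have : trajWeight sd 0 = fun s : Fin 1 → ℕ => sd (s 0) := by
      funext s; unfold trajWeight; simp
    rw [this]
    have hinj : Function.Injective (fun s : Fin 1 → ℕ => s 0) := by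
      intro a b h
      funext i
      rw [Fin.eq_zero i]
      exact h
    exact hsd.comp_injective hinj
  | succ n ih =>
    have key : Summable (fun p : (Fin (n + 1) → ℕ) × ℕ =>
        trajWeight sd n p.1 * chainT (p.1 (Fin.last n)) p.2) := by
      rw [summable_prod_of_nonneg
        (fun p => mul_nonneg (trajWeight_nonneg sd hsd0 n p.1) (chainT_nonneg _ _))]
      constructor
      · intro s
        show Summable fun y => trajWeight sd n s * chainT (s (Fin.last n)) y
        exact Summable.mul_left _ (chainT_summable (s (Fin.last n)))
      show Summable fun s => ∑' j, trajWeight sd n s * chainT (s (Fin.last n)) j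
      apply Summable.of_nonneg_of_le _ _ ih
      · intro s
        exact tsum_nonneg fun j =>
          mul_nonneg (trajWeight_nonneg sd hsd0 n s) (chainT_nonneg _ _)
      · intro s
        rw [tsum_mul_left]
        calc trajWeight sd n s * ∑' j, chainT (s (Fin.last n)) j
            ≤ trajWeight sd n s * 1 :=
              mul_le_mul_of_nonneg_left (chainT_tsum_le _)
                (trajWeight_nonneg sd hsd0 n s)
          _ = trajWeight sd n s := mul_one _
    have hcomp : Summable (trajWeight sd (n + 1) ∘ finSnocEquiv n) := by
      have heq : (trajWeight sd (n + 1) ∘ finSnocEquiv n) =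
          fun p : (Fin (n + 1) → ℕ) × ℕ =>
            trajWeight sd n p.1 * chainT (p.1 (Fin.last n)) p.2 := by
        funext p
        show trajWeight sd (n + 1) (Fin.snoc p.1 p.2) = _
        exact trajWeight_snoc sd n p.1 p.2
      rw [heq]
      exact key
    exact (finSnocEquiv n).summable_iff.mp hcomp

lemma prodT : ∀ n : ℕ,
    (∏ i : Fin n, (((i : ℕ) : ℝ) + 1) ^ 2 / (((i : ℕ) : ℝ) + 2) ^ 2)
      = 1 / ((n : ℝ) + 1) ^ 2 := by
  intro n
  induction n with
  | zero => simp
  | succ n ih =>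
    rw [Fin.prod_univ_castSucc]
    simp only [Fin.coe_castSucc, Fin.val_last]
    rw [ih]
    push_cast
    have h1 : ((n : ℝ) + 1) ≠ 0 := by positivity
    have h2 : ((n : ℝ) + 2) ≠ 0 := by positivity
    field_simp
    ring

/-- For the hidden-Markov measure `μ_x` built from the stationary positive-recurrent chain
(with stationary distribution `sd`, `sd₁ > 0`) via `g_x(j) = x_j`, the cumulative KL loss of
`μ_x` on the Dirac measure `δ_x` satisfies
`L_m(δ_x, μ_x) = −log μ_x(x_{1..m}) ≤ −log sd₁ + 2 log(m+1) = o(m)`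
(stated here for words of length `m = n+1`). -/
theorem hmm_predicts_deterministic_sequence
    (x : ℕ → Fin 3) (sd : ℕ → ℝ)
    (hsd0 : ∀ j, 0 ≤ sd j) (hsdsum : ∑' j, sd j = 1)
    (hstat : ∀ j', sd j' = ∑' j, sd j * chainT j j')
    (hsd1 : 0 < sd 1) :
    ∀ n : ℕ,
      - Real.log (hmmWord sd x n (fun i : Fin (n + 1) => x ((i : ℕ) + 1))) ≤
        - Real.log (sd 1) + 2 * Real.log ((n : ℝ) + 2) := by
  intro n
  classical
  have hsd : Summable sd := by
    by_contra h
    rw [tsum_eq_zero_of_not_summable h] at hsdsum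
    norm_num at hsdsum
  set w : Fin (n + 1) → Fin 3 := fun i : Fin (n + 1) => x ((i : ℕ) + 1) with hw
  set f : (Fin (n + 1) → ℕ) → ℝ :=
    fun s => if (∀ i, x (s i) = w i) then trajWeight sd n s else 0 with hf
  have hfnn : ∀ s, 0 ≤ f s := by
    intro s; rw [hf]; dsimp only
    split_ifs
    · exact trajWeight_nonneg sd hsd0 n s
    · exact le_rfl
  have hfsum : Summable f := by
    apply Summable.of_nonneg_of_le hfnn _ (trajWeight_summable sd hsd0 hsd n)
    intro s; rw [hf]; dsimp only
    split_ifs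
    · exact le_rfl
    · exact trajWeight_nonneg sd hsd0 n s
  set sstar : Fin (n + 1) → ℕ := fun i => (i : ℕ) + 1 with hsstar
  have hcond : ∀ i : Fin (n + 1), x (sstar i) = w i := fun i => rfl
  have hchain : ∀ i : Fin n, chainT (sstar i.castSucc) (sstar i.succ)
      = (((i : ℕ) : ℝ) + 1) ^ 2 / (((i : ℕ) : ℝ) + 2) ^ 2 := by
    intro i
    have h1 : sstar i.castSucc = (i : ℕ) + 1 := by simp [hsstar]
    have h2 : sstar i.succ = (i : ℕ) + 2 := by simp only [hsstar, Fin.val_succ]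
    rw [h1, h2]
    unfold chainT
    rw [if_pos rfl]
    push_cast
    ring_nf
  have hstarval : trajWeight sd n sstar = sd 1 * (1 / ((n : ℝ) + 1) ^ 2) := by
    unfold trajWeight
    have h0 : sstar 0 = 1 := rfl
    rw [h0, Finset.prod_congr rfl (fun i _ => hchain i), prodT n]
  have hfstar : f sstar = sd 1 * (1 / ((n : ℝ) + 1) ^ 2) := by
    rw [hf]; dsimp only
    rw [if_pos hcond, hstarval]
  have hle : sd 1 * (1 / ((n : ℝ) + 1) ^ 2) ≤ hmmWord sd x n w := by
    rw [← hfstar]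
    exact Summable.le_tsum hfsum sstar fun j _ => hfnn j
  have hcpos : 0 < sd 1 * (1 / ((n : ℝ) + 1) ^ 2) := by positivity
  have hlog : Real.log (sd 1 * (1 / ((n : ℝ) + 1) ^ 2)) ≤
      Real.log (hmmWord sd x n w) := Real.log_le_log hcpos hle
  have hlogc : Real.log (sd 1 * (1 / ((n : ℝ) + 1) ^ 2))
      = Real.log (sd 1) - 2 * Real.log ((n : ℝ) + 1) := by
    rw [mul_one_div, Real.log_div (ne_of_gt hsd1) (by positivity),
      Real.log_pow]
    push_cast; ring
  have hmono : Real.log ((n : ℝ) + 1) ≤ Real.log ((n : ℝ) + 2) :=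
    Real.log_le_log (by positivity) (by linarith)
  have : - Real.log (hmmWord sd x n w) ≤ - Real.log (sd 1 * (1 / ((n : ℝ) + 1) ^ 2)) :=
    neg_le_neg hlog
  rw [hlogc] at this
  calc - Real.log (hmmWord sd x n w)
      ≤ -(Real.log (sd 1) - 2 * Real.log ((n : ℝ) + 1)) := this
    _ ≤ - Real.log (sd 1) + 2 * Real.log ((n : ℝ) + 2) := by linarith
end
end

section
/- Let C be any set of probability measures on X^∞ with c_n(C) := Σ_{x_{1..n}} sup_{μ∈C} μ(x_{1..n}) finite for each n, and suppose log c_n(C) = o(n). Then the mixture predictor ρ_c := Σ_k w_k μ^(k) — where μ^(k) agrees with the normalized maximum-likelihood measure λ_C on X^k and outputs a fixed symbol afterwards, and w_k = (6/π²)/k² — satisfies (1/n)L_n(μ,ρ_c) ≤ (1/n)(log c_n(C) + 2 log n + log(π²/6)) → 0 for every μ ∈ C. -/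
/-!
Every `μ ∈ C` satisfies `μ(x₁..xₙ) ≤ c_{x₁..xₙ}(C) = c_n(C) λ_C(x₁..xₙ)`, and the `n`-th component
of the mixture gives `ρ_c(x₁..xₙ) ≥ w_n λ_C(x₁..xₙ)`. Hence `μ/ρ_c ≤ c_n(C)/w_n` pointwise and
`L_n(μ, ρ_c) ≤ log (c_n(C)/w_n) = log c_n(C) + 2 log n + log (π²/6)`. Each `μ^(k)` is a
sub-probability and the weights sum to `1`, so `ρ_c` is a sub-probability and `L_n(μ, ρ_c) ≥ 0`;
the limit follows by squeezing.
-/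

open Real Filter
open scoped Topology

noncomputable section

/-- Cumulative KL loss `L_n(μ,ρ)`. -/
def KL {X : Type} [Fintype X] (μ ρ : (n : ℕ) → (Fin n → X) → ℝ) (n : ℕ) : ℝ :=
  ∑ w : Fin n → X, μ n w * Real.log (μ n w / ρ n w)

/-- Maximum-likelihood coefficient of a word: `c_{x_{1..n}}(C) = sup_{μ∈C} μ(x_{1..n})`. -/
def cWord {X : Type} [Fintype X] (C : Set ((n : ℕ) → (Fin n → X) → ℝ)) (n : ℕ)
    (w : Fin n → X) : ℝ :=
  sSup ((fun μ => μ n w) '' C)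

/-- The normalizer `c_n(C) = Σ_{x_{1..n}} c_{x_{1..n}}(C)`. -/
def cN {X : Type} [Fintype X] (C : Set ((n : ℕ) → (Fin n → X) → ℝ)) (n : ℕ) : ℝ :=
  ∑ w : Fin n → X, cWord C n w

/-- The normalized maximum likelihood (NML) estimator `λ_C`. -/
def nml {X : Type} [Fintype X] (C : Set ((n : ℕ) → (Fin n → X) → ℝ)) (n : ℕ)
    (w : Fin n → X) : ℝ :=
  cWord C n w / cN C n

/-- Extension of a word of length `n` by a word of length `k − n` (for `n ≤ k`). -/
def extendW {X : Type} {n k : ℕ} (h : n ≤ k) (w : Fin n → X) (v : Fin (k - n) → X) :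
    Fin k → X :=
  fun i => if hi : (i : ℕ) < n then w ⟨i, hi⟩
    else v ⟨(i : ℕ) - n, by have := i.isLt; omega⟩

open scoped Classical in
/-- The measure `μ^{(k)}` that agrees with the NML estimator `λ_C` on words of length `k`
and outputs the fixed symbol `a₀` deterministically afterwards (for shorter words, its
probabilities are the corresponding marginals). -/
def nmlK {X : Type} [Fintype X] (C : Set ((n : ℕ) → (Fin n → X) → ℝ)) (a₀ : X)
    (k n : ℕ) (w : Fin n → X) : ℝ :=
  if h : n ≤ k then ∑ v : Fin (k - n) → X, nml C k (extendW h w v)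
  else
    nml C k (fun i : Fin k => w (Fin.castLE (le_of_not_ge h) i)) *
      (if ∀ i : Fin n, k ≤ (i : ℕ) → w i = a₀ then 1 else 0)

/-- The mixture predictor `ρ_c = Σ_{k≥1} w_k μ^{(k)}` with `w_k = (6/π²)/k²`. -/
def rhoC {X : Type} [Fintype X] (C : Set ((n : ℕ) → (Fin n → X) → ℝ)) (a₀ : X)
    (n : ℕ) (w : Fin n → X) : ℝ :=
  ∑' k : ℕ, ((6 / Real.pi ^ 2) / ((k : ℝ) + 1) ^ 2) * nmlK C a₀ (k + 1) n w

theorem sum_comp_le_sum_univ_of_injOn {ι κ : Type*} [Fintype κ] [DecidableEq κ]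
    {s : Finset ι} {e : ι → κ} (he : Set.InjOn e s) {f : κ → ℝ} (hf : ∀ j, 0 ≤ f j) :
    ∑ i ∈ s, f (e i) ≤ ∑ j, f j := by
  rw [← Finset.sum_image he]
  exact Finset.sum_le_univ_sum_of_nonneg hf

section LogRatio

variable {ι : Type*} [Fintype ι] {p q : ι → ℝ}

theorem sum_mul_log_div_le_neg_log {t : ℝ} (ht : 0 < t) (hp : ∀ i, 0 ≤ p i)
    (hp_sum : ∑ i, p i = 1) (hpq : ∀ i, t * p i ≤ q i) :
    ∑ i, p i * log (p i / q i) ≤ -log t := by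
  calc ∑ i, p i * log (p i / q i) ≤ ∑ i, p i * -log t := Finset.sum_le_sum fun i _ => ?_
    _ = -log t := by rw [← Finset.sum_mul, hp_sum, one_mul]
  rcases (hp i).eq_or_lt with h | h
  · simp [← h]
  have hq : 0 < q i := (mul_pos ht h).trans_le (hpq i)
  refine mul_le_mul_of_nonneg_left ?_ h.le
  rw [← log_inv]
  refine log_le_log (div_pos h hq) ?_
  rw [div_le_iff₀ hq, ← div_eq_inv_mul, le_div_iff₀ ht, mul_comm]
  exact hpq i

theorem sum_sub_sum_le_sum_mul_log_div (hp : ∀ i, 0 ≤ p i) (hq : ∀ i, 0 ≤ q i)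
    (hpq : ∀ i, 0 < p i → 0 < q i) :
    ∑ i, p i - ∑ i, q i ≤ ∑ i, p i * log (p i / q i) := by
  rw [← Finset.sum_sub_distrib]
  refine Finset.sum_le_sum fun i _ => ?_
  rcases (hp i).eq_or_lt with h | h
  · simp [← h, hq i]
  have hq' := hpq i h
  calc p i - q i = p i * (1 - (p i / q i)⁻¹) := by field_simp
    _ ≤ p i * log (p i / q i) :=
      mul_le_mul_of_nonneg_left (one_sub_inv_le_log_of_pos (div_pos h hq')) h.le

end LogRatio

section Mixture

variable {ι : Type*} [Fintype ι] {a : ℕ → ℝ} {ν : ℕ → ι → ℝ}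

theorem summable_mixture (ha : Summable a) (ha₀ : ∀ k, 0 ≤ a k) (hν₀ : ∀ k i, 0 ≤ ν k i)
    (hν₁ : ∀ k, ∑ i, ν k i ≤ 1) (i : ι) : Summable fun k => a k * ν k i :=
  ha.of_nonneg_of_le (fun k => mul_nonneg (ha₀ k) (hν₀ k i)) fun k =>
    mul_le_of_le_one_right (ha₀ k)
      ((Finset.single_le_sum (fun j _ => hν₀ k j) (Finset.mem_univ i)).trans (hν₁ k))

theorem sum_mixture_le_one (ha : HasSum a 1) (ha₀ : ∀ k, 0 ≤ a k) (hν₀ : ∀ k i, 0 ≤ ν k i)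
    (hν₁ : ∀ k, ∑ i, ν k i ≤ 1) : ∑ i, ∑' k, a k * ν k i ≤ 1 := by
  have hsum := summable_mixture ha.summable ha₀ hν₀ hν₁
  rw [← Summable.tsum_finsetSum fun i _ => hsum i, ← ha.tsum_eq]
  refine Summable.tsum_le_tsum (fun k => ?_) (summable_sum fun i _ => hsum i) ha.summable
  rw [← Finset.mul_sum]
  exact mul_le_of_le_one_right (ha₀ k) (hν₁ k)

end Mixture

section NML

variable {X : Type} [Fintype X] {C : Set ((n : ℕ) → (Fin n → X) → ℝ)}

theorem IsProcess.le_one {μ : (n : ℕ) → (Fin n → X) → ℝ} (hμ : IsProcess μ) (n : ℕ)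
    (w : Fin n → X) : μ n w ≤ 1 :=
  (Finset.single_le_sum (fun v _ => hμ.1 n v) (Finset.mem_univ w)).trans (hμ.2.1 n).le

theorem le_cWord (hC : ∀ μ ∈ C, IsProcess μ) {μ : (n : ℕ) → (Fin n → X) → ℝ} (hμ : μ ∈ C)
    (n : ℕ) (w : Fin n → X) : μ n w ≤ cWord C n w := by
  refine le_csSup ⟨1, ?_⟩ ⟨μ, hμ, rfl⟩
  rintro _ ⟨ν, hν, rfl⟩
  exact (hC ν hν).le_one n w

theorem cWord_nonneg (hC : ∀ μ ∈ C, IsProcess μ) (hCne : C.Nonempty) (n : ℕ) (w : Fin n → X) :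
    0 ≤ cWord C n w :=
  let ⟨μ, hμ⟩ := hCne
  ((hC μ hμ).1 n w).trans (le_cWord hC hμ n w)

theorem one_le_cN (hC : ∀ μ ∈ C, IsProcess μ) (hCne : C.Nonempty) (n : ℕ) : 1 ≤ cN C n := by
  obtain ⟨μ, hμ⟩ := hCne
  rw [← (hC μ hμ).2.1 n]
  exact Finset.sum_le_sum fun w _ => le_cWord hC hμ n w

theorem cN_pos (hC : ∀ μ ∈ C, IsProcess μ) (hCne : C.Nonempty) (n : ℕ) : 0 < cN C n :=
  one_pos.trans_le (one_le_cN hC hCne n)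

theorem nml_nonneg (hC : ∀ μ ∈ C, IsProcess μ) (hCne : C.Nonempty) (n : ℕ) (w : Fin n → X) :
    0 ≤ nml C n w :=
  div_nonneg (cWord_nonneg hC hCne n w) (cN_pos hC hCne n).le

theorem sum_nml (hC : ∀ μ ∈ C, IsProcess μ) (hCne : C.Nonempty) (n : ℕ) :
    ∑ w : Fin n → X, nml C n w = 1 := by
  simp only [nml, ← Finset.sum_div]
  exact div_self (cN_pos hC hCne n).ne'

end NML

section NMLK

theorem extendW_injective {X : Type} {n k : ℕ} (h : n ≤ k) :
    Function.Injective fun p : (Fin n → X) × (Fin (k - n) → X) => extendW h p.1 p.2 := by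
  rintro ⟨w, v⟩ ⟨w', v'⟩ he
  simp only [Prod.mk.injEq]
  constructor
  · funext i
    simpa [extendW, i.isLt] using congrFun he ⟨i, i.isLt.trans_le h⟩
  · funext j
    have hj : n + (j : ℕ) < k := by omega
    simpa [extendW] using congrFun he ⟨n + j, hj⟩

theorem injOn_comp_castLE {X : Type} {n k : ℕ} (h : k ≤ n) (a₀ : X) :
    Set.InjOn (fun (w : Fin n → X) (i : Fin k) => w (Fin.castLE h i))
      {w | ∀ i : Fin n, k ≤ (i : ℕ) → w i = a₀} := by
  intro w hw w' hw' hww'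
  funext i
  by_cases hik : (i : ℕ) < k
  · simpa using congrFun hww' ⟨i, hik⟩
  · rw [hw i (not_lt.mp hik), hw' i (not_lt.mp hik)]

variable {X : Type} [Fintype X] {C : Set ((n : ℕ) → (Fin n → X) → ℝ)}

theorem nmlK_self (a₀ : X) (n : ℕ) (w : Fin n → X) : nmlK C a₀ n n w = nml C n w := by
  have : IsEmpty (Fin (n - n)) := by rw [Nat.sub_self]; infer_instance
  rw [nmlK, dif_pos le_rfl, Fintype.sum_unique]
  congr 1
  funext i
  rw [extendW, dif_pos i.isLt]

theorem nmlK_nonneg (hC : ∀ μ ∈ C, IsProcess μ) (hCne : C.Nonempty) (a₀ : X) (k n : ℕ)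
    (w : Fin n → X) : 0 ≤ nmlK C a₀ k n w := by
  rw [nmlK]
  split_ifs
  · exact Finset.sum_nonneg fun v _ => nml_nonneg hC hCne k _
  · simpa using nml_nonneg hC hCne k _
  · simp

theorem sum_nmlK_le_one (hC : ∀ μ ∈ C, IsProcess μ) (hCne : C.Nonempty) (a₀ : X) (k n : ℕ) :
    ∑ w : Fin n → X, nmlK C a₀ k n w ≤ 1 := by
  classical
  rw [← sum_nml hC hCne k]
  by_cases h : n ≤ k
  · simp only [nmlK, dif_pos h]
    rw [← Fintype.sum_prod_type']
    exact sum_comp_le_sum_univ_of_injOn (s := Finset.univ) (extendW_injective h).injOn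
      (nml_nonneg hC hCne k)
  · simp only [nmlK, dif_neg h, mul_ite, mul_one, mul_zero]
    rw [← Finset.sum_filter]
    refine sum_comp_le_sum_univ_of_injOn ((injOn_comp_castLE (not_le.mp h).le a₀).mono ?_)
      (nml_nonneg hC hCne k)
    intro w hw
    simpa using hw

end NMLK

theorem hasSum_six_div_pi_sq_div_succ_sq :
    HasSum (fun k : ℕ => 6 / π ^ 2 / ((k : ℝ) + 1) ^ 2) 1 := by
  have h := (hasSum_nat_add_iff' 1).mpr hasSum_zeta_two
  simp only [Finset.range_one, Finset.sum_singleton, Nat.cast_zero, Nat.cast_add, Nat.cast_one,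
    zero_pow two_ne_zero, div_zero, sub_zero] at h
  have h6 : 6 / π ^ 2 * (π ^ 2 / 6) = 1 := by
    rw [div_mul_div_comm, mul_comm (6 : ℝ), div_self (by positivity)]
  have h' := h.mul_left (6 / π ^ 2)
  rw [h6] at h'
  simpa only [mul_one_div] using h'

section Predictor

variable {X : Type} [Fintype X] {C : Set ((n : ℕ) → (Fin n → X) → ℝ)}
  {μ : (n : ℕ) → (Fin n → X) → ℝ}

theorem summable_rhoC_summand (hC : ∀ μ ∈ C, IsProcess μ) (hCne : C.Nonempty) (a₀ : X)
    (n : ℕ) (w : Fin n → X) :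
    Summable fun k : ℕ => 6 / π ^ 2 / ((k : ℝ) + 1) ^ 2 * nmlK C a₀ (k + 1) n w :=
  summable_mixture hasSum_six_div_pi_sq_div_succ_sq.summable (fun _ => by positivity)
    (fun k => nmlK_nonneg hC hCne a₀ (k + 1) n) (fun k => sum_nmlK_le_one hC hCne a₀ (k + 1) n) w

theorem rhoC_nonneg (hC : ∀ μ ∈ C, IsProcess μ) (hCne : C.Nonempty) (a₀ : X) (n : ℕ)
    (w : Fin n → X) : 0 ≤ rhoC C a₀ n w :=
  tsum_nonneg fun k => mul_nonneg (by positivity) (nmlK_nonneg hC hCne a₀ (k + 1) n w)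

theorem sum_rhoC_le_one (hC : ∀ μ ∈ C, IsProcess μ) (hCne : C.Nonempty) (a₀ : X) (n : ℕ) :
    ∑ w : Fin n → X, rhoC C a₀ n w ≤ 1 :=
  sum_mixture_le_one hasSum_six_div_pi_sq_div_succ_sq (fun _ => by positivity)
    (fun k => nmlK_nonneg hC hCne a₀ (k + 1) n) (fun k => sum_nmlK_le_one hC hCne a₀ (k + 1) n)

theorem mul_nml_le_rhoC (hC : ∀ μ ∈ C, IsProcess μ) (hCne : C.Nonempty) (a₀ : X) {n : ℕ}
    (hn : 1 ≤ n) (w : Fin n → X) : 6 / π ^ 2 / (n : ℝ) ^ 2 * nml C n w ≤ rhoC C a₀ n w := by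
  obtain ⟨m, rfl⟩ := Nat.exists_eq_add_of_le' hn
  have h := (summable_rhoC_summand hC hCne a₀ (m + 1) w).le_tsum m fun k _ =>
    mul_nonneg (by positivity) (nmlK_nonneg hC hCne a₀ (k + 1) (m + 1) w)
  rwa [nmlK_self, ← Nat.cast_succ] at h

theorem mul_le_rhoC (hC : ∀ μ ∈ C, IsProcess μ) (hμ : μ ∈ C) (a₀ : X) {n : ℕ} (hn : 1 ≤ n)
    (w : Fin n → X) : 6 / π ^ 2 / (n : ℝ) ^ 2 / cN C n * μ n w ≤ rhoC C a₀ n w := by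
  have hCne : C.Nonempty := ⟨μ, hμ⟩
  calc 6 / π ^ 2 / (n : ℝ) ^ 2 / cN C n * μ n w
      = 6 / π ^ 2 / (n : ℝ) ^ 2 * (μ n w / cN C n) := by ring
    _ ≤ 6 / π ^ 2 / (n : ℝ) ^ 2 * nml C n w := by
      gcongr
      exact div_le_div_of_nonneg_right (le_cWord hC hμ n w) (cN_pos hC hCne n).le
    _ ≤ rhoC C a₀ n w := mul_nml_le_rhoC hC hCne a₀ hn w

theorem KL_rhoC_le (hC : ∀ μ ∈ C, IsProcess μ) (hμ : μ ∈ C) (a₀ : X) {n : ℕ} (hn : 1 ≤ n) :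
    KL μ (rhoC C a₀) n ≤ log (cN C n) + 2 * log n + log (π ^ 2 / 6) := by
  have hcN := cN_pos hC ⟨μ, hμ⟩ n
  have hn' : (0 : ℝ) < n := by exact_mod_cast hn
  calc KL μ (rhoC C a₀) n ≤ -log (6 / π ^ 2 / (n : ℝ) ^ 2 / cN C n) :=
        sum_mul_log_div_le_neg_log (by positivity) ((hC μ hμ).1 n) ((hC μ hμ).2.1 n)
          (mul_le_rhoC hC hμ a₀ hn)
    _ = log (cN C n) + 2 * log n + log (π ^ 2 / 6) := by
      rw [← log_inv, show (6 / π ^ 2 / (n : ℝ) ^ 2 / cN C n)⁻¹ = cN C n * n ^ 2 * (π ^ 2 / 6) by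
        field_simp, log_mul (by positivity) (by positivity), log_mul (by positivity)
        (by positivity), log_pow, Nat.cast_ofNat]

theorem KL_rhoC_nonneg (hC : ∀ μ ∈ C, IsProcess μ) (hμ : μ ∈ C) (a₀ : X) {n : ℕ}
    (hn : 1 ≤ n) : 0 ≤ KL μ (rhoC C a₀) n := by
  have hCne : C.Nonempty := ⟨μ, hμ⟩
  have hcN := cN_pos hC hCne n
  have hn' : (0 : ℝ) < n := by exact_mod_cast hn
  have h := sum_sub_sum_le_sum_mul_log_div ((hC μ hμ).1 n) (rhoC_nonneg hC hCne a₀ n)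
    fun w hw => (mul_pos (by positivity) hw).trans_le (mul_le_rhoC hC hμ a₀ hn w)
  rw [(hC μ hμ).2.1 n] at h
  rw [KL]
  linarith [sum_rhoC_le_one hC hCne a₀ n]

end Predictor

theorem tendsto_one_div_mul_add_two_log_add_const {f : ℕ → ℝ}
    (hf : Tendsto (fun n : ℕ => f n / n) atTop (𝓝 0)) (c : ℝ) :
    Tendsto (fun n : ℕ => (1 / (n : ℝ)) * (f n + 2 * log n + c)) atTop (𝓝 0) := by
  have hlog : Tendsto (fun n : ℕ => log n / (n : ℝ)) atTop (𝓝 0) :=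
    isLittleO_log_id_atTop.tendsto_div_nhds_zero.comp tendsto_natCast_atTop_atTop
  have h := (hf.add (hlog.const_mul 2)).add (tendsto_const_div_atTop_nhds_zero_nat c)
  rw [mul_zero, add_zero, add_zero] at h
  exact h.congr fun n => by ring

theorem nml_mixture_predicts_general
    {X : Type} [Fintype X] (C : Set ((n : ℕ) → (Fin n → X) → ℝ))
    (hC : ∀ μ ∈ C, IsProcess μ) (a₀ : X)
    (hsub : Tendsto (fun n : ℕ => Real.log (cN C n) / n) atTop (𝓝 0)) :
    ∀ μ ∈ C,
      (∀ n : ℕ, 1 ≤ n →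
        (1 / (n : ℝ)) * KL μ (rhoC C a₀) n ≤
          (1 / (n : ℝ)) *
            (Real.log (cN C n) + 2 * Real.log n + Real.log (Real.pi ^ 2 / 6))) ∧
      Tendsto (fun n : ℕ => (1 / (n : ℝ)) * KL μ (rhoC C a₀) n) atTop (𝓝 0) := by
  intro μ hμ
  have hbound (n : ℕ) (hn : 1 ≤ n) := mul_le_mul_of_nonneg_left (KL_rhoC_le hC hμ a₀ hn)
    (one_div_nonneg.mpr n.cast_nonneg)
  refine ⟨hbound, tendsto_of_tendsto_of_tendsto_of_le_of_le' tendsto_const_nhds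
    (tendsto_one_div_mul_add_two_log_add_const hsub (log (π ^ 2 / 6))) ?_ ?_⟩
  · filter_upwards [eventually_ge_atTop 1] with n hn
    exact mul_nonneg (one_div_nonneg.mpr n.cast_nonneg) (KL_rhoC_nonneg hC hμ a₀ hn)
  · filter_upwards [eventually_ge_atTop 1] with n hn
    exact hbound n hn

/-- If `log c_n(C) = o(n)`, then the NML-based mixture predictor `ρ_c` satisfies
`(1/n) L_n(μ,ρ_c) ≤ (1/n)(log c_n(C) + 2 log n + log(π²/6)) → 0` for every `μ ∈ C`. -/
theorem nml_mixture_predicts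
    {X : Type} [Fintype X] (C : Set ((n : ℕ) → (Fin n → X) → ℝ))
    (hC : ∀ μ ∈ C, IsProcess μ) (hCne : C.Nonempty) (a₀ : X)
    (hsub : Tendsto (fun n : ℕ => Real.log (cN C n) / n) atTop (𝓝 0)) :
    ∀ μ ∈ C,
      (∀ n : ℕ, 1 ≤ n →
        (1 / (n : ℝ)) * KL μ (rhoC C a₀) n ≤
          (1 / (n : ℝ)) *
            (Real.log (cN C n) + 2 * Real.log n + Real.log (Real.pi ^ 2 / 6))) ∧
      Tendsto (fun n : ℕ => (1 / (n : ℝ)) * KL μ (rhoC C a₀) n) atTop (𝓝 0) :=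
  nml_mixture_predicts_general C hC a₀ hsub
end
end
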